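/- Let s : ℝ^n → ℝ^C be an affine function (so each s_k has zero Hessian) and p = softmax(s). Then the Hessian of log p_i satisfies H(log p_i)(x) = −∑_{k=1}^C ∇ p_k(x) (∇ s_k(x))ᵀ, independently of i. -/

import Mathlib

/-- Coordinate gradient of a scalar function on `ℝ^n`. -/
noncomputable def grad {n : ℕ} (f : (Fin n → ℝ) → ℝ) (x : Fin n → ℝ) : Fin n → ℝ :=
  fun i => fderiv ℝ f x (Pi.single i 1)

/-- The softmax probabilities obtained from a score function `s`. -/
noncomputable def softmaxP {n C : ℕ} (s : (Fin n → ℝ) → Fin C → ℝ) (i : Fin C)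
    (x : Fin n → ℝ) : ℝ :=
  Real.exp (s x i) / ∑ j, Real.exp (s x j)


/-- Coordinate Hessian matrix of a scalar function on `ℝ^n`. -/
noncomputable def hess {n : ℕ} (f : (Fin n → ℝ) → ℝ) (x : Fin n → ℝ) :
    Matrix (Fin n) (Fin n) ℝ :=
  fun i j => fderiv ℝ (fun y => fderiv ℝ f y (Pi.single j 1)) x (Pi.single i 1)

/-!
Since `log pᵢ = sᵢ - log ∑ⱼ exp sⱼ`, the gradient of `log pᵢ` is `∇sᵢ - ∑ₖ pₖ ∇sₖ`. For affine
scores the `∇sₖ` are the constant rows `Aₖ`, so the second derivative only hits the weights `pₖ`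
and equals `-∑ₖ ∇pₖ Aₖᵀ`; the term `∇sᵢ` that depends on `i` disappears.
-/

open Matrix

section

variable {n C : ℕ}

theorem hasFDerivAt_mulVec_add_apply (A : Matrix (Fin C) (Fin n) ℝ) (b : Fin C → ℝ) (k : Fin C)
    (y : Fin n → ℝ) :
    HasFDerivAt (fun y => (A *ᵥ y + b) k)
      (ContinuousLinearMap.proj k ∘L LinearMap.toContinuousLinearMap A.mulVecLin) y :=
  hasFDerivAt_pi'.1 ((LinearMap.toContinuousLinearMap A.mulVecLin).hasFDerivAt.add_const b) k

theorem grad_mulVec_add_apply (A : Matrix (Fin C) (Fin n) ℝ) (b : Fin C → ℝ) (k : Fin C)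
    (y : Fin n → ℝ) : grad (fun y => (A *ᵥ y + b) k) y = A k := by
  ext j
  rw [grad, (hasFDerivAt_mulVec_add_apply A b k y).fderiv]
  simp

theorem sum_exp_pos (s : Fin C → ℝ) (i : Fin C) : 0 < ∑ j, Real.exp (s j) :=
  Finset.sum_pos (fun _ _ => Real.exp_pos _) ⟨i, Finset.mem_univ i⟩

theorem hess_apply (f : (Fin n → ℝ) → ℝ) (x : Fin n → ℝ) (a j : Fin n) :
    hess f x a j = grad (fun y => grad f y j) x a :=
  rfl

variable {s : (Fin n → ℝ) → Fin C → ℝ} {y : Fin n → ℝ}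

theorem differentiableAt_softmaxP (hs : ∀ k, DifferentiableAt ℝ (fun y => s y k) y) (i : Fin C) :
    DifferentiableAt ℝ (softmaxP s i) y := by
  unfold softmaxP
  fun_prop (disch := exact (sum_exp_pos _ i).ne')

theorem hasFDerivAt_log_softmaxP {s' : Fin C → (Fin n → ℝ) →L[ℝ] ℝ}
    (hs : ∀ k, HasFDerivAt (fun y => s y k) (s' k) y) (i : Fin C) :
    HasFDerivAt (fun y => Real.log (softmaxP s i y)) (s' i - ∑ k, softmaxP s k y • s' k) y := by
  have hlog : (fun y => Real.log (softmaxP s i y))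
      = fun y => s y i - Real.log (∑ j, Real.exp (s y j)) := by
    funext y
    rw [softmaxP, Real.log_div (Real.exp_ne_zero _) (sum_exp_pos _ i).ne', Real.log_exp]
  have hZ := (HasFDerivAt.fun_sum fun k _ => (hs k).exp).log (sum_exp_pos (s y) i).ne'
  have hweights : ∑ k, softmaxP s k y • s' k
      = (∑ j, Real.exp (s y j))⁻¹ • ∑ k, Real.exp (s y k) • s' k := by
    simp only [Finset.smul_sum, smul_smul, softmaxP, div_eq_inv_mul]
  rw [hlog, hweights]
  exact (hs i).sub hZ

theorem grad_log_softmaxP (hs : ∀ k, DifferentiableAt ℝ (fun y => s y k) y) (i : Fin C) :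
    grad (fun y => Real.log (softmaxP s i y)) y
      = grad (fun y => s y i) y - ∑ k, softmaxP s k y • grad (fun y => s y k) y := by
  ext j
  simp [grad, (hasFDerivAt_log_softmaxP (fun k => (hs k).hasFDerivAt) i).fderiv]

end

theorem stmt10 {n C : ℕ} (A : Matrix (Fin C) (Fin n) ℝ) (b : Fin C → ℝ)
    (s : (Fin n → ℝ) → Fin C → ℝ) (hs : ∀ x, s x = A.mulVec x + b)
    (i : Fin C) (x : Fin n → ℝ) :
    hess (fun y => Real.log (softmaxP s i y)) x =
      -∑ k, Matrix.vecMulVec (grad (softmaxP s k) x) (grad (fun y => s y k) x) := by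
  have hsA : s = fun y => A *ᵥ y + b := funext hs
  have hgrad_s : ∀ k y, grad (fun y => s y k) y = A k := by
    simpa only [hsA] using grad_mulVec_add_apply A b
  have hds : ∀ k y, DifferentiableAt ℝ (fun y => s y k) y := by
    simpa only [hsA] using fun k y => (hasFDerivAt_mulVec_add_apply A b k y).differentiableAt
  have hpartial : ∀ j, (fun y => grad (fun y => Real.log (softmaxP s i y)) y j)
      = fun y => A i j - ∑ k, softmaxP s k y * A k j := by
    intro j
    funext y
    simpa [hgrad_s] using congrFun (grad_log_softmaxP (hds · y) i) j
  ext a j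
  have hderiv : HasFDerivAt (fun y => A i j - ∑ k, softmaxP s k y * A k j)
      (-∑ k, A k j • fderiv ℝ (softmaxP s k) x) x :=
    (HasFDerivAt.fun_sum fun k _ =>
      (differentiableAt_softmaxP (hds · x) k).hasFDerivAt.mul_const (A k j)).const_sub _
  rw [hess_apply, hpartial, grad, hderiv.fderiv]
  simp [vecMulVec_apply, Matrix.sum_apply, hgrad_s, grad, mul_comm]
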